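/- Suppose I ⊆ [0, N−1] satisfies the Partial Order Property, let w_min = min_{x∈I} w(g_x), and let i ∈ I with w(g_i) = w_min. Then for every subset J ⊆ K_i there exists a set M ⊆ (I ∩ [i+1, N−1]) \ K_i such that w(g_i ⊕ ⊕_{j∈J} g_j ⊕ ⊕_{m∈M} g_m) = w_min. -/

import Mathlib

noncomputable section
open scoped Classical
open Finset

/-- The 2×2 binary matrix [[1,0],[1,1]], as an ℕ-indexed function (zero outside range). -/
def G2 (a b : ℕ) : ZMod 2 :=
  if a = 0 ∧ b = 0 then 1
  else if a = 1 ∧ b = 0 then 1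
  else if a = 1 ∧ b = 1 then 1
  else 0

/-- `G n i c` is the (i,c) entry of the n-th Kronecker power over F₂ of [[1,0],[1,1]],
for row/column indices i, c ∈ [0, 2^n − 1] (standard row-major index flattening). -/
def G : ℕ → ℕ → ℕ → ZMod 2
  | 0 => fun i c => if i = 0 ∧ c = 0 then 1 else 0
  | n + 1 => fun i c => G2 (i / 2 ^ n) (c / 2 ^ n) * G n (i % 2 ^ n) (c % 2 ^ n)

/-- Row i of the polar transform G_N (N = 2^n), as a vector of its coordinates. -/
def g (n i : ℕ) : ℕ → ZMod 2 := fun c => G n i c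

/-- S_i ⊆ [0, n−1]: the support of the binary representation of i. -/
def S (n i : ℕ) : Finset ℕ := (Finset.range n).filter fun a => i.testBit a

/-- T_i = [0, n−1] \ S_i. -/
def T (n i : ℕ) : Finset ℕ := Finset.range n \ S n i

/-- Hamming weight of a vector whose coordinates are indexed by [0, 2^n − 1]. -/
def wt (n : ℕ) (v : ℕ → ZMod 2) : ℕ :=
  ((Finset.range (2 ^ n)).filter fun c => v c ≠ 0).card

/-- The index in [0, 2^n − 1] whose binary support is the set U ⊆ [0, n−1]. -/
def idx (U : Finset ℕ) : ℕ := ∑ a ∈ U, 2 ^ a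

/-- K_i = {j ∈ [i+1, N−1] : w(g_j) ≥ w(g_i ⊕ g_j) and w(g_i ⊕ g_j) = w(g_i)}. -/
def K (n i : ℕ) : Finset ℕ :=
  (Finset.Ico (i + 1) (2 ^ n)).filter fun j =>
    wt n (g n i + g n j) ≤ wt n (g n j) ∧ wt n (g n i + g n j) = wt n (g n i)

/-- One generating step of the partial order on [0, 2^n − 1]. -/
def poStep (n i j : ℕ) : Prop :=
  i < 2 ^ n ∧ j < 2 ^ n ∧
    (S n i ⊆ S n j ∨
      ∃ a b, a ∈ S n i ∧ b ∉ S n i ∧ a < b ∧ S n j = insert b (S n i \ {a}))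

/-- The partial order ⪯: reflexive–transitive closure of the generating relation. -/
def po (n : ℕ) : ℕ → ℕ → Prop := Relation.ReflTransGen (poStep n)

/-- Partial Order Property of an information set I ⊆ [0, 2^n − 1]. -/
def POP (n : ℕ) (I : Finset ℕ) : Prop :=
  ∀ i ∈ I, ∀ j, j < 2 ^ n → po n i j → j ∈ I

/-- The code C(I): all F₂-linear combinations (i.e. subset sums) of the rows g_i, i ∈ I. -/
def codewords (n : ℕ) (I : Finset ℕ) : Finset (ℕ → ZMod 2) :=
  I.powerset.image fun H => ∑ h ∈ H, g n h

/-- A_w(I): the number of codewords of C(I) of Hamming weight w. -/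
def A (n : ℕ) (I : Finset ℕ) (w : ℕ) : ℕ :=
  ((codewords n I).filter fun v => wt n v = w).card

/-- The coset C_i(I) = {g_i ⊕ ⊕_{h∈H} g_h : H ⊆ I \ [0,i]}. -/
def coset (n : ℕ) (I : Finset ℕ) (i : ℕ) : Finset (ℕ → ZMod 2) :=
  ((I.filter fun h => i < h).powerset).image fun H => g n i + ∑ h ∈ H, g n h

/-- A_{i,w}(I): the number of vectors of Hamming weight w in the coset C_i(I). -/
def Ai (n : ℕ) (I : Finset ℕ) (i w : ℕ) : ℕ :=
  ((coset n I i).filter fun v => wt n v = w).card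

/-!
Read the row `g_m` as the function `x ↦ ∏_{a ∉ S_m} (1 + x_a)` of the bits `x` of a coordinate.
For `b ∉ S_i` put `ρ_b = ∑_{j ∈ J, b ∈ S_j} ∏_{a ∈ S_i \ S_j} (1 + x_a)`. It only depends on
the bits in `S_i`, so `v = ∏_{b ∉ S_i} (1 + x_b + ρ_b)` is nonzero exactly when `x_b = ρ_b` for
all `b ∉ S_i`, i.e. on `2 ^ |S_i| = w(g_i)` coordinates. Expanding the product over the sets `B`
of factors that contribute a `ρ_b` gives `g_i` for `B = ∅` and `∑_{j ∈ J} g_j` for `|B| = 1`,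
because each `j ∈ K_i` adds exactly one bit to `S_i`. For `|B| ≥ 2` every monomial is a row `g_m`
with `S_m = (S_i \ D) ∪ B`, where each dropped bit of `D` is smaller than a bit of `B` replacing
it; so `i ⪯ m`, whence `m ∈ I` and `i < m`, while `|S_m \ S_i| = |B| ≥ 2` rules out `m ∈ K_i`.
Over `F₂` these rows add up to the sum over a set `M` of distinct rows.
-/

lemma card_filter_xor_add {α : Type*} (s : Finset α) (p q : α → Prop) [DecidablePred p]
    [DecidablePred q] :
    #{x ∈ s | ¬(p x ↔ q x)} + 2 * #{x ∈ s | p x ∧ q x} =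
      #{x ∈ s | p x} + #{x ∈ s | q x} := by
  simp only [card_filter, mul_sum, ← sum_add_distrib]
  refine sum_congr rfl fun x _ => ?_
  by_cases hp : p x <;> by_cases hq : q x <;> simp [hp, hq]

lemma ite_add_ite_ne_zero (p q : Prop) [Decidable p] [Decidable q] :
    ((if p then 1 else 0) + (if q then 1 else 0) : ZMod 2) ≠ 0 ↔ ¬(p ↔ q) := by
  by_cases hp : p <;> by_cases hq : q <;> simp only [hp, hq, if_true, if_false] <;> decide

lemma sum_powerset_eq_add_sum_singleton_add {α M : Type*} [DecidableEq α] [AddCommMonoid M]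
    (s : Finset α) (f : Finset α → M) :
    ∑ t ∈ s.powerset, f t =
      f ∅ + ∑ a ∈ s, f {a} + ∑ t ∈ s.powerset with 2 ≤ #t, f t := by
  rw [← sum_filter_not_add_sum_filter _ (fun t => 2 ≤ #t)]
  congr 1
  have hsmall : {t ∈ s.powerset | ¬2 ≤ #t} =
      cons ∅ (s.map ⟨_, singleton_injective⟩) (by simp) := by
    ext t
    simp only [mem_filter, mem_powerset, not_le, mem_cons, mem_map, Function.Embedding.coeFn_mk]
    constructor
    · rintro ⟨hts, hcard⟩
      interval_cases h : #t
      · exact Or.inl (card_eq_zero.1 h)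
      · obtain ⟨a, rfl⟩ := card_eq_one.1 h
        exact Or.inr ⟨a, hts (mem_singleton_self a), rfl⟩
    · rintro (rfl | ⟨a, ha, rfl⟩)
      · simp
      · simp [ha]
  rw [hsmall, sum_cons, sum_map]
  rfl

/-- Such an `X` is determined by its trace `X ∩ s`, which can be any subset of `s`. -/
lemma card_filter_powerset_graph {α : Type*} [DecidableEq α] {s t : Finset α}
    (hst : Disjoint s t) (p : Finset α → α → Prop) (hp : ∀ X b, p X b ↔ p (X ∩ s) b) :
    #{X ∈ (s ∪ t).powerset | ∀ b ∈ t, b ∈ X ↔ p X b} = 2 ^ #s := by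
  have hgraph : ∀ U ⊆ s, (U ∪ {b ∈ t | p U b}) ∩ s = U := fun U hU => by
    rw [union_inter_distrib_right, inter_eq_left.2 hU,
      disjoint_iff_inter_eq_empty.1 (disjoint_of_subset_left (filter_subset _ t) hst.symm),
      union_empty]
  rw [← card_powerset]
  refine card_nbij' (· ∩ s) (fun U => U ∪ {b ∈ t | p U b}) (fun X _ => ?_) (fun U hU => ?_)
    (fun X hX => ?_) (fun U hU => hgraph U (mem_powerset.1 hU))
  · exact mem_powerset.2 inter_subset_right
  · have hU : U ⊆ s := mem_powerset.1 hU
    simp only [coe_filter, mem_powerset, Set.mem_ofPred_eq]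
    refine ⟨union_subset_union hU (filter_subset _ t), fun b hb => ?_⟩
    rw [hp, hgraph U hU, mem_union, mem_filter]
    exact ⟨fun h => (h.resolve_left fun hbU => disjoint_right.1 hst hb (hU hbU)).2,
      fun h => Or.inr ⟨hb, h⟩⟩
  · simp only [coe_filter, mem_powerset, Set.mem_ofPred_eq] at hX
    ext x
    simp only [mem_union, mem_inter, mem_filter, ← hp]
    constructor
    · rintro (h | ⟨hxt, hx⟩)
      · exact h.1
      · exact (hX.2 x hxt).2 hx
    · intro hx
      rcases mem_union.1 (hX.1 hx) with hxs | hxt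
      · exact Or.inl ⟨hx, hxs⟩
      · exact Or.inr ⟨hxt, (hX.2 x hxt).1 hx⟩

lemma exists_subset_sum_eq_of_mem_span {ι V : Type*} [AddCommGroup V] [Module (ZMod 2) V]
    {v : ι → V} {s : Finset ι} {x : V} (hx : x ∈ Submodule.span (ZMod 2) (v '' s)) :
    ∃ t ⊆ s, ∑ k ∈ t, v k = x := by
  obtain ⟨a, rfl⟩ := (Submodule.mem_span_image_finset_iff_exists_fun' (ZMod 2)).1 hx
  refine ⟨{k ∈ s | a k = 1}, filter_subset _ _, ?_⟩
  rw [sum_filter]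
  refine sum_congr rfl fun k _ => ?_
  obtain h | h : a k = 0 ∨ a k = 1 := by generalize a k = z; revert z; decide
  all_goals simp [h]

section RowExpansion

variable {n : ℕ}

lemma testBit_idx (U : Finset ℕ) (b : ℕ) : (idx U).testBit b = decide (b ∈ U) := by
  rw [← Bool.coe_iff_coe, ← Nat.mem_bitIndices, ← List.mem_toFinset, idx,
    toFinset_bitIndices_sum_two_pow]
  simp

lemma idx_lt_two_pow {U : Finset ℕ} (hU : U ⊆ range n) : idx U < 2 ^ n :=
  Nat.geomSum_lt le_rfl fun _ h => mem_range.1 (hU h)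

lemma mem_S {c a : ℕ} : a ∈ S n c ↔ a < n ∧ c.testBit a := by
  simp [S]

lemma S_subset_range (c : ℕ) : S n c ⊆ range n := filter_subset _ _

lemma S_idx {U : Finset ℕ} (hU : U ⊆ range n) : S n (idx U) = U := by
  ext a
  simp only [mem_S, testBit_idx, decide_eq_true_eq]
  exact ⟨And.right, fun h => ⟨mem_range.1 (hU h), h⟩⟩

lemma idx_S {c : ℕ} (hc : c < 2 ^ n) : idx (S n c) = c := by
  refine Nat.eq_of_testBit_eq fun a => ?_
  by_cases ha : a < n
  · simp [testBit_idx, mem_S, ha]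
  · simp [testBit_idx, mem_S, ha,
      Nat.testBit_eq_false_of_lt (hc.trans_le (Nat.pow_le_pow_right two_pos (not_lt.1 ha)))]

lemma idx_lt_idx_iff {U V : Finset ℕ} : idx U < idx V ↔ toColex U < toColex V :=
  geomSum_lt_geomSum_iff_toColex_lt_toColex le_rfl

lemma S_succ_subset_S_succ {c i : ℕ} :
    S (n + 1) c ⊆ S (n + 1) i ↔
      (c.testBit n → i.testBit n) ∧ S n (c % 2 ^ n) ⊆ S n (i % 2 ^ n) := by
  simp only [subset_iff, mem_S, Nat.testBit_mod_two_pow, Nat.lt_succ_iff_lt_or_eq,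
    Bool.and_eq_true, decide_eq_true_eq]
  constructor
  · intro h
    exact ⟨fun hc => (h ⟨Or.inr rfl, hc⟩).2,
      fun a ⟨ha, _, hc⟩ => ⟨ha, ha, (h ⟨Or.inl ha, hc⟩).2⟩⟩
  · rintro ⟨hn, h⟩ a ⟨ha | rfl, hc⟩
    · exact ⟨Or.inl ha, (h ⟨ha, ha, hc⟩).2.2⟩
    · exact ⟨Or.inr rfl, hn hc⟩

lemma div_two_pow_eq {x : ℕ} (hx : x < 2 ^ (n + 1)) : x / 2 ^ n = (x.testBit n).toNat := by
  have : x / 2 ^ n < 2 := Nat.div_lt_of_lt_mul (by rwa [← pow_succ])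
  rw [Nat.testBit_eq_decide_div_mod_eq]
  interval_cases h : x / 2 ^ n <;> simp

lemma G_eq_ite {i c : ℕ} (hi : i < 2 ^ n) (hc : c < 2 ^ n) :
    G n i c = if S n c ⊆ S n i then 1 else 0 := by
  induction n generalizing i c with
  | zero => simp_all [G, S]
  | succ n ih =>
    simp only [G]
    rw [ih (Nat.mod_lt _ (by positivity)) (Nat.mod_lt _ (by positivity)),
      div_two_pow_eq hi, div_two_pow_eq hc]
    simp only [S_succ_subset_S_succ]
    cases c.testBit n <;> cases i.testBit n <;> simp [G2]

lemma g_idx {m : ℕ} {X : Finset ℕ} (hm : m < 2 ^ n) (hX : X ⊆ range n) :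
    g n m (idx X) = if X ⊆ S n m then 1 else 0 := by
  rw [g, G_eq_ite hm (idx_lt_two_pow hX), S_idx hX]

lemma wt_eq_card_powerset (v : ℕ → ZMod 2) :
    wt n v = #{X ∈ (range n).powerset | v (idx X) ≠ 0} := by
  refine card_nbij' (S n) idx (fun c hc => ?_) (fun X hX => ?_) (fun c hc => ?_) (fun X hX => ?_)
  · simp only [coe_filter, mem_range, Set.mem_ofPred_eq] at hc ⊢
    exact ⟨mem_powerset.2 (S_subset_range c), by rw [idx_S hc.1]; exact hc.2⟩
  · simp only [coe_filter, mem_powerset, mem_range, Set.mem_ofPred_eq] at hX ⊢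
    exact ⟨idx_lt_two_pow hX.1, hX.2⟩
  · exact idx_S (mem_range.1 (mem_filter.1 hc).1)
  · exact S_idx (mem_powerset.1 (mem_filter.1 hX).1)

lemma wt_congr {u v : ℕ → ZMod 2} (h : ∀ c < 2 ^ n, u c = v c) : wt n u = wt n v := by
  simp only [wt]
  exact congrArg card (filter_congr fun c hc => by rw [h c (mem_range.1 hc)])

lemma card_filter_powerset_range_subset {U : Finset ℕ} (hU : U ⊆ range n) :
    #{X ∈ (range n).powerset | X ⊆ U} = 2 ^ #U := by
  rw [← card_powerset]
  congr 1
  ext X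
  simp only [mem_filter, mem_powerset]
  exact ⟨And.right, fun h => ⟨h.trans hU, h⟩⟩

lemma wt_g {m : ℕ} (hm : m < 2 ^ n) : wt n (g n m) = 2 ^ #(S n m) := by
  rw [wt_eq_card_powerset, ← card_filter_powerset_range_subset (S_subset_range m)]
  refine congrArg card (filter_congr fun X hX => ?_)
  rw [g_idx hm (mem_powerset.1 hX)]
  simp

lemma wt_g_add_g {i j : ℕ} (hi : i < 2 ^ n) (hj : j < 2 ^ n) :
    wt n (g n i + g n j) + 2 * 2 ^ #(S n i ∩ S n j) = 2 ^ #(S n i) + 2 ^ #(S n j) := by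
  rw [← card_filter_powerset_range_subset (S_subset_range i),
    ← card_filter_powerset_range_subset (S_subset_range j),
    ← card_filter_powerset_range_subset (inter_subset_left.trans (S_subset_range i)),
    wt_eq_card_powerset]
  simp only [subset_inter_iff]
  rw [← card_filter_xor_add]
  congr 2
  refine filter_congr fun X hX => ?_
  rw [Pi.add_apply, g_idx hi (mem_powerset.1 hX), g_idx hj (mem_powerset.1 hX),
    ite_add_ite_ne_zero]

lemma lt_of_mem_K {i j : ℕ} (hj : j ∈ K n i) : i < j ∧ j < 2 ^ n := by
  simpa [K, Nat.succ_le_iff] using (mem_filter.1 hj).1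

/-- From `w(g_i ⊕ g_j) + 2 ^ (|S_i ∩ S_j| + 1) = 2 ^ |S_i| + 2 ^ |S_j|`, the two weight conditions
of `K_i` force `|S_j| = |S_i ∩ S_j| + 1` and `|S_i| ≤ |S_j|`. -/
lemma card_sdiff_of_mem_K {i j : ℕ} (hi : i < 2 ^ n) (hj : j ∈ K n i) :
    #(S n j \ S n i) = 1 ∧ #(S n i \ S n j) ≤ 1 := by
  obtain ⟨hle, heq⟩ := (mem_filter.1 hj).2
  have hsum := wt_g_add_g hi (lt_of_mem_K hj).2
  rw [wt_g hi] at heq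
  rw [wt_g (lt_of_mem_K hj).2] at hle
  have hj' : #(S n j \ S n i) + #(S n i ∩ S n j) = #(S n j) := by
    rw [inter_comm]; exact card_sdiff_add_card_inter _ _
  have hi' : #(S n i \ S n j) + #(S n i ∩ S n j) = #(S n i) := card_sdiff_add_card_inter _ _
  have hpow : 2 ^ #(S n j) = 2 ^ (#(S n i ∩ S n j) + 1) := by rw [pow_succ]; omega
  have hle' : #(S n i) ≤ #(S n j) := (Nat.pow_le_pow_iff_right one_lt_two).1 (heq ▸ hle)
  have hcard := Nat.pow_right_injective le_rfl hpow
  omega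

lemma lt_of_mem_K_of_mem_sdiff {i j a b : ℕ} (hi : i < 2 ^ n) (hj : j ∈ K n i)
    (ha : a ∈ S n i \ S n j) (hb : b ∈ S n j \ S n i) : a < b := by
  have hlt : idx (S n i) < idx (S n j) := by
    rw [idx_S hi, idx_S (lt_of_mem_K hj).2]; exact (lt_of_mem_K hj).1
  obtain ⟨b', hb'j, hb'i, hmax⟩ :=
    Colex.toColex_lt_toColex_iff_exists_forall_lt.1 (idx_lt_idx_iff.1 hlt)
  have hb'b : b' = b := card_le_one.1 (card_sdiff_of_mem_K hi hj).1.le _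
    (mem_sdiff.2 ⟨hb'j, hb'i⟩) _ hb
  exact hb'b ▸ hmax a (mem_sdiff.1 ha).1 (mem_sdiff.1 ha).2

lemma le_of_poStep {i j : ℕ} (h : poStep n i j) : i ≤ j := by
  obtain ⟨hi, hj, hsub | ⟨a, b, ha, hb, hab, hS⟩⟩ := h
  · rw [← idx_S hi, ← idx_S hj]; exact sum_le_sum_of_subset hsub
  · rw [← idx_S hi, ← idx_S hj, hS, sdiff_singleton_eq_erase]
    conv_lhs => rw [← insert_erase ha]
    refine (idx_lt_idx_iff.2 ((Colex.insert_lt_insert ?_ ?_).2 hab)).le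
    · exact notMem_erase a _
    · exact fun h => hb (mem_of_mem_erase h)

lemma le_of_po {i j : ℕ} (h : po n i j) : i ≤ j := by
  induction h with
  | refl => exact le_rfl
  | tail _ hstep ih => exact ih.trans (le_of_poStep hstep)

lemma poStep_insert_sdiff {Y A : Finset ℕ} {b : ℕ} (hY : Y ⊆ range n) (hb : b < n)
    (hbY : b ∉ Y) (hA : #A ≤ 1) (hAb : ∀ a ∈ A, a < b) :
    poStep n (idx Y) (idx (insert b (Y \ A))) := by
  have hY' : insert b (Y \ A) ⊆ range n :=
    insert_subset (mem_range.2 hb) (sdiff_subset.trans hY)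
  refine ⟨idx_lt_two_pow hY, idx_lt_two_pow hY', ?_⟩
  rw [S_idx hY, S_idx hY']
  by_cases hAY : ∃ a ∈ A, a ∈ Y
  · obtain ⟨a, haA, haY⟩ := hAY
    have hAa : A = {a} :=
      eq_singleton_iff_unique_mem.2 ⟨haA, fun x hx => card_le_one.1 hA x hx a haA⟩
    exact Or.inr ⟨a, b, haY, hbY, hAb a haA, by rw [hAa]⟩
  · push Not at hAY
    exact Or.inl fun x hx => mem_insert_of_mem (mem_sdiff.2 ⟨hx, fun hxA => hAY x hxA hx⟩)

lemma po_sdiff_biUnion_union {X B : Finset ℕ} {A : ℕ → Finset ℕ} (hX : X ⊆ range n)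
    (hB : B ⊆ range n) (hXB : Disjoint X B)
    (hA : ∀ b ∈ B, A b ⊆ X ∧ #(A b) ≤ 1 ∧ ∀ a ∈ A b, a < b) :
    po n (idx X) (idx ((X \ B.biUnion A) ∪ B)) := by
  induction B using Finset.induction_on with
  | empty =>
    simp only [biUnion_empty, sdiff_empty, union_empty]
    exact Relation.ReflTransGen.refl
  | insert b B hbB ih =>
    obtain ⟨hAX, hAcard, hAlt⟩ := hA b (mem_insert_self b B)
    have hY : (X \ B.biUnion A) ∪ B ⊆ range n :=
      union_subset (sdiff_subset.trans hX) ((subset_insert b B).trans hB)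
    have hbY : b ∉ (X \ B.biUnion A) ∪ B := by
      simp only [mem_union, mem_sdiff, not_or, not_and_or]
      exact ⟨Or.inl (disjoint_right.1 hXB (mem_insert_self b B)), hbB⟩
    have hstep := poStep_insert_sdiff hY (mem_range.1 (hB (mem_insert_self b B))) hbY hAcard hAlt
    have hsets : insert b (((X \ B.biUnion A) ∪ B) \ A b) =
        (X \ (insert b B).biUnion A) ∪ insert b B := by
      ext x
      have hxA : x ∈ A b → ¬(x = b ∨ x ∈ B) := fun h => by
        simpa using disjoint_left.1 hXB (hAX h)
      simp only [mem_insert, mem_union, mem_sdiff, biUnion_insert]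
      tauto
    rw [← hsets]
    exact (ih ((subset_insert b B).trans hB) (disjoint_of_subset_right (subset_insert b B) hXB)
      fun b' hb' => hA b' (mem_insert_of_mem hb')).tail hstep

/-- The monomial `∏_{a ∈ U} (1 + x_a)` evaluated at the bits `x` of `c`. -/
def noBitsIn (U : Finset ℕ) (c : ℕ) : ZMod 2 :=
  if ∀ a ∈ U, c.testBit a = false then 1 else 0

lemma prod_noBitsIn {ι : Type*} (s : Finset ι) (U : ι → Finset ℕ) (c : ℕ) :
    ∏ x ∈ s, noBitsIn (U x) c = noBitsIn (s.biUnion U) c := by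
  simp only [noBitsIn, prod_boole, mem_biUnion, forall_exists_index, and_imp]
  congr 1
  exact propext ⟨fun h a x hx ha => h x hx a ha, fun h x hx a ha => h a x hx ha⟩

lemma noBitsIn_union (U V : Finset ℕ) (c : ℕ) :
    noBitsIn (U ∪ V) c = noBitsIn U c * noBitsIn V c := by
  simp only [noBitsIn, mem_union, or_imp, forall_and]
  split_ifs <;> simp_all

lemma noBitsIn_idx (U X : Finset ℕ) : noBitsIn U (idx X) = if Disjoint U X then 1 else 0 := by
  simp [noBitsIn, testBit_idx, disjoint_left]

lemma g_eq_noBitsIn {m c : ℕ} (hm : m < 2 ^ n) (hc : c < 2 ^ n) :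
    g n m c = noBitsIn (range n \ S n m) c := by
  rw [g, G_eq_ite hm hc, noBitsIn]
  congr 1
  simp only [subset_iff, mem_S, mem_sdiff, mem_range, and_imp, not_and, Bool.not_eq_true]
  refine propext ⟨fun h a ha hma => ?_, fun h a ha hca => ⟨ha, ?_⟩⟩
  · by_contra hca
    simpa [hma ha] using (h ha (by simpa using hca)).2
  · by_contra hma
    simpa [hca] using h a ha fun _ => by simpa using hma

/-- `twist n i J b` is the `ρ_b` of the proof sketch and `twistedRow n i J` is `v`. -/
def twist (n i : ℕ) (J : Finset ℕ) (b c : ℕ) : ZMod 2 :=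
  ∑ j ∈ J with b ∈ S n j, noBitsIn (S n i \ S n j) c

def twistedRow (n i : ℕ) (J : Finset ℕ) (c : ℕ) : ZMod 2 :=
  ∏ b ∈ T n i, (noBitsIn {b} c + twist n i J b c)

lemma twist_idx_inter (i : ℕ) (J : Finset ℕ) (b : ℕ) (X : Finset ℕ) :
    twist n i J b (idx X) = twist n i J b (idx (X ∩ S n i)) := by
  refine sum_congr rfl fun j _ => ?_
  simp only [noBitsIn_idx, disjoint_left, mem_sdiff, mem_inter]
  congr 1
  exact propext ⟨fun h a ha => not_and.2 fun hX _ => h ha hX,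
    fun h a ha hX => h ha ⟨hX, ha.1⟩⟩

lemma noBitsIn_singleton_add_ne_zero (b : ℕ) (X : Finset ℕ) (t : ZMod 2) :
    noBitsIn {b} (idx X) + t ≠ 0 ↔ (b ∈ X ↔ t ≠ 0) := by
  simp only [noBitsIn_idx, disjoint_singleton_left]
  by_cases hb : b ∈ X <;> simp only [hb, if_true, if_false, not_true, not_false_eq_true] <;>
    revert t <;> decide

lemma wt_twistedRow (i : ℕ) (J : Finset ℕ) :
    wt n (twistedRow n i J) = 2 ^ #(S n i) := by
  have hcount := card_filter_powerset_graph (disjoint_sdiff : Disjoint (S n i) (T n i))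
    (fun X b => twist n i J b (idx X) ≠ 0) (fun X b => by rw [twist_idx_inter i J b X])
  rw [union_sdiff_of_subset (S_subset_range i)] at hcount
  rw [wt_eq_card_powerset, ← hcount]
  congr! 3 with X
  simp only [twistedRow, prod_ne_zero_iff, noBitsIn_singleton_add_ne_zero, T]

lemma twistedRow_eq_sum_powerset (i : ℕ) (J : Finset ℕ) (c : ℕ) :
    twistedRow n i J c =
      ∑ B ∈ (T n i).powerset, (∏ b ∈ B, twist n i J b c) * noBitsIn (T n i \ B) c := by
  simp only [twistedRow, add_comm (noBitsIn _ c), prod_add, prod_noBitsIn,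
    biUnion_singleton_eq_self]

lemma noBitsIn_mul_noBitsIn_eq_g {i c : ℕ} {D B : Finset ℕ} (hD : D ⊆ S n i)
    (hB : B ⊆ T n i) (hc : c < 2 ^ n) :
    noBitsIn D c * noBitsIn (T n i \ B) c = g n (idx ((S n i \ D) ∪ B)) c := by
  have hY : (S n i \ D) ∪ B ⊆ range n :=
    union_subset (sdiff_subset.trans (S_subset_range i)) (hB.trans sdiff_subset)
  rw [← noBitsIn_union, g_eq_noBitsIn (idx_lt_two_pow hY) hc, S_idx hY]
  congr 1
  ext x
  have hxD := @hD x
  have hxB := @hB x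
  have hxS := @S_subset_range n i x
  simp only [T, mem_union, mem_sdiff] at hxB ⊢
  tauto

lemma twist_mul_noBitsIn_eq_sum_g {i b c : ℕ} {J : Finset ℕ} (hi : i < 2 ^ n) (hJ : J ⊆ K n i)
    (hb : b ∈ T n i) (hc : c < 2 ^ n) :
    twist n i J b c * noBitsIn (T n i \ {b}) c = ∑ j ∈ J with b ∈ S n j, g n j c := by
  rw [twist, sum_mul]
  refine sum_congr rfl fun j hj => ?_
  obtain ⟨hjJ, hbj⟩ := mem_filter.1 hj
  have hjK := hJ hjJ
  have hbji : b ∈ S n j \ S n i := mem_sdiff.2 ⟨hbj, (mem_sdiff.1 hb).2⟩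
  have hsd : S n j \ S n i = {b} := eq_singleton_iff_unique_mem.2
    ⟨hbji, fun x hx => card_le_one.1 (card_sdiff_of_mem_K hi hjK).1.le x hx b hbji⟩
  rw [noBitsIn_mul_noBitsIn_eq_g sdiff_subset (singleton_subset_iff.2 hb) hc, ← hsd,
    sdiff_sdiff_self_left, union_comm, inter_comm (S n i), sdiff_union_inter,
    idx_S (lt_of_mem_K hjK).2]

lemma sum_sum_filter_mem_S {M : Type*} [AddCommMonoid M] {i : ℕ} {J : Finset ℕ}
    (hi : i < 2 ^ n) (hJ : J ⊆ K n i) (f : ℕ → M) :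
    ∑ b ∈ T n i, ∑ j ∈ J with b ∈ S n j, f j = ∑ j ∈ J, f j := by
  rw [sum_comm' (t' := J) (s' := fun j => S n j \ S n i)]
  · refine sum_congr rfl fun j hj => ?_
    rw [sum_const, (card_sdiff_of_mem_K hi (hJ hj)).1, one_smul]
  · intro b j
    have hbn := @S_subset_range n j b
    simp only [T, mem_filter, mem_sdiff]
    tauto

def rowOfChoice (n i : ℕ) (B : Finset ℕ) (σ : ℕ → ℕ) : ℕ :=
  idx ((S n i \ B.biUnion fun b => S n i \ S n (σ b)) ∪ B)

lemma rowOfChoice_mem {I : Finset ℕ} (hPOP : POP n I) {i : ℕ} (hiI : i ∈ I) (hi : i < 2 ^ n)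
    {B : Finset ℕ} {σ : ℕ → ℕ} (hB : B ⊆ T n i) (hB2 : 2 ≤ #B)
    (hσ : ∀ b ∈ B, σ b ∈ K n i ∧ b ∈ S n (σ b)) :
    rowOfChoice n i B σ ∈ (I.filter fun m => i < m) \ K n i := by
  have hBi : Disjoint (S n i) B := disjoint_of_subset_right hB disjoint_sdiff
  have hBr : B ⊆ range n := hB.trans sdiff_subset
  have hY : (S n i \ B.biUnion fun b => S n i \ S n (σ b)) ∪ B ⊆ range n :=
    union_subset (sdiff_subset.trans (S_subset_range i)) hBr
  have hlt : rowOfChoice n i B σ < 2 ^ n := idx_lt_two_pow hY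
  have hSm : S n (rowOfChoice n i B σ) \ S n i = B := by
    rw [rowOfChoice, S_idx hY, union_sdiff_distrib, sdiff_eq_empty_iff_subset.2 sdiff_subset,
      empty_union, sdiff_eq_self_of_disjoint hBi.symm]
  have hpo : po n i (rowOfChoice n i B σ) := by
    have hpo' := po_sdiff_biUnion_union (S_subset_range i) hBr hBi fun b hb =>
      ⟨sdiff_subset, (card_sdiff_of_mem_K hi (hσ b hb).1).2, fun a ha =>
        lt_of_mem_K_of_mem_sdiff hi (hσ b hb).1 ha
          (mem_sdiff.2 ⟨(hσ b hb).2, disjoint_right.1 hBi hb⟩)⟩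
    rwa [idx_S hi] at hpo'
  have hne : rowOfChoice n i B σ ≠ i := fun h => by
    rw [h, sdiff_self] at hSm
    simp [← hSm] at hB2
  refine mem_sdiff.2 ⟨mem_filter.2 ⟨hPOP i hiI _ hlt hpo, (le_of_po hpo).lt_of_ne hne.symm⟩,
    fun hK => ?_⟩
  have hcard := (card_sdiff_of_mem_K hi hK).1
  rw [hSm] at hcard
  omega

lemma exists_mem_span_eq_term {I : Finset ℕ} (hPOP : POP n I) {i : ℕ} (hiI : i ∈ I)
    (hi : i < 2 ^ n) {J : Finset ℕ} (hJ : J ⊆ K n i) {B : Finset ℕ} (hB : B ⊆ T n i)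
    (hB2 : 2 ≤ #B) :
    ∃ F ∈ Submodule.span (ZMod 2) (g n '' ↑((I.filter fun m => i < m) \ K n i)),
      ∀ c < 2 ^ n, (∏ b ∈ B, twist n i J b c) * noBitsIn (T n i \ B) c = F c := by
  let choice (σ : ∀ b ∈ B, ℕ) (b : ℕ) : ℕ := if h : b ∈ B then σ b h else 0
  refine ⟨∑ σ ∈ B.pi fun b => {j ∈ J | b ∈ S n j}, g n (rowOfChoice n i B (choice σ)),
    Submodule.sum_mem _ fun σ hσ => Submodule.subset_span ⟨_, ?_, rfl⟩, fun c hc => ?_⟩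
  · refine rowOfChoice_mem hPOP hiI hi hB hB2 fun b hb => ?_
    obtain ⟨hσJ, hbσ⟩ := mem_filter.1 (mem_pi.1 hσ b hb)
    simp only [choice, dif_pos hb]
    exact ⟨hJ hσJ, hbσ⟩
  · simp only [twist, prod_sum, sum_mul, Finset.sum_apply]
    refine sum_congr rfl fun σ _ => ?_
    have hprod : ∏ x ∈ B.attach, noBitsIn (S n i \ S n (σ x.1 x.2)) c =
        ∏ b ∈ B, noBitsIn (S n i \ S n (choice σ b)) c := by
      rw [← prod_attach B]
      exact prod_congr rfl fun x _ => by simp only [choice, dif_pos x.2]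
    rw [hprod, prod_noBitsIn, noBitsIn_mul_noBitsIn_eq_g (biUnion_subset.2 fun _ _ => sdiff_subset)
      hB hc, rowOfChoice]

lemma exists_sum_g_eq_twistedRow {I : Finset ℕ} (hPOP : POP n I) {i : ℕ} (hiI : i ∈ I)
    (hi : i < 2 ^ n) {J : Finset ℕ} (hJ : J ⊆ K n i) :
    ∃ M ⊆ (I.filter fun m => i < m) \ K n i, ∀ c < 2 ^ n,
      (g n i + ∑ j ∈ J, g n j + ∑ m ∈ M, g n m) c = twistedRow n i J c := by
  choose! F hF hFterm using fun B (hB : B ∈ {B ∈ (T n i).powerset | 2 ≤ #B}) =>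
    exists_mem_span_eq_term hPOP hiI hi hJ (mem_powerset.1 (mem_filter.1 hB).1)
      (mem_filter.1 hB).2
  obtain ⟨M, hM, hMF⟩ := exists_subset_sum_eq_of_mem_span (Submodule.sum_mem _ hF)
  refine ⟨M, hM, fun c hc => ?_⟩
  have hempty : (∏ b ∈ ∅, twist n i J b c) * noBitsIn (T n i \ ∅) c = g n i c := by
    rw [prod_empty, one_mul, sdiff_empty]
    exact (g_eq_noBitsIn hi hc).symm
  have hsingle : ∑ b ∈ T n i, (∏ b' ∈ {b}, twist n i J b' c) * noBitsIn (T n i \ {b}) c =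
      ∑ j ∈ J, g n j c := by
    simp only [prod_singleton]
    rw [sum_congr rfl fun b hb => twist_mul_noBitsIn_eq_sum_g hi hJ hb hc,
      sum_sum_filter_mem_S hi hJ]
  have hlarge : ∑ B ∈ (T n i).powerset with 2 ≤ #B,
      (∏ b ∈ B, twist n i J b c) * noBitsIn (T n i \ B) c = ∑ m ∈ M, g n m c := by
    rw [sum_congr rfl fun B hB => hFterm B hB c hc, ← Finset.sum_apply, ← hMF, Finset.sum_apply]
  rw [twistedRow_eq_sum_powerset, sum_powerset_eq_add_sum_singleton_add, hempty, hsingle, hlarge]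
  simp only [Pi.add_apply, Finset.sum_apply]

end RowExpansion

theorem M_construction_exists_general (n : ℕ) (I : Finset ℕ)
    (hIr : ∀ x ∈ I, x < 2 ^ n) (hPOP : POP n I)
    (wmin : ℕ)
    (i : ℕ) (hiI : i ∈ I) (hwi : wt n (g n i) = wmin)
    (J : Finset ℕ) (hJ : J ⊆ K n i) :
    ∃ M : Finset ℕ, M ⊆ (I.filter fun m => i < m) \ K n i ∧
      wt n (g n i + ∑ j ∈ J, g n j + ∑ m ∈ M, g n m) = wmin := by
  have hi : i < 2 ^ n := hIr i hiI
  obtain ⟨M, hM, hrow⟩ := exists_sum_g_eq_twistedRow hPOP hiI hi hJ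
  exact ⟨M, hM, by rw [wt_congr hrow, wt_twistedRow, ← wt_g hi, hwi]⟩

/-- if I satisfies POP, i ∈ I with w(g_i) = w_min, then for every J ⊆ K_i
there exists M ⊆ (I ∩ [i+1,N−1]) \ K_i with w(g_i ⊕ ⊕_{j∈J} g_j ⊕ ⊕_{m∈M} g_m) = w_min. -/
theorem M_construction_exists (n : ℕ) (hn : 1 ≤ n) (I : Finset ℕ) (hI : I.Nonempty)
    (hIr : ∀ x ∈ I, x < 2 ^ n) (hPOP : POP n I)
    (wmin : ℕ) (hw : wmin = I.inf' hI fun x => wt n (g n x))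
    (i : ℕ) (hiI : i ∈ I) (hwi : wt n (g n i) = wmin)
    (J : Finset ℕ) (hJ : J ⊆ K n i) :
    ∃ M : Finset ℕ, M ⊆ (I.filter fun m => i < m) \ K n i ∧
      wt n (g n i + ∑ j ∈ J, g n j + ∑ m ∈ M, g n m) = wmin :=
  M_construction_exists_general n I hIr hPOP wmin i hiI hwi J hJ
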